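/- For every even integer n ≥ 2, every real a ≥ 1, and every x ∈ (0, π): ∑_{j=1}^n C(n + a − j, n − j) sin(jx) ≥ 2 sin(x)(1 + cos(x)), with equality if and only if (n = 2, a = 1) or (n = 4, a = 1, x = π/2). -/

import Mathlib

open Real Finset

/-- Generalized binomial coefficient `(a + k choose k) = ∏_{ν=1}^{k} (a+ν)/ν`. -/
noncomputable def gbinom (a : ℝ) (k : ℕ) : ℝ := ∏ ν ∈ Finset.Icc 1 k, (a + ν) / ν

/-- `S n a x = ∑_{j=1}^n C(n+a−j, n−j) sin(jx)`. -/
noncomputable def S (n : ℕ) (a : ℝ) (x : ℝ) : ℝ :=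
  ∑ j ∈ Finset.Icc 1 n, gbinom a (n - j) * Real.sin (j * x)

lemma S_def (n : ℕ) (a x : ℝ) :
    S n a x = ∑ j ∈ Finset.Icc 1 n, gbinom a (n - j) * Real.sin (j * x) := rfl

lemma gbinom_zero (a : ℝ) : gbinom a 0 = 1 := by simp [gbinom]

lemma gbinom_succ (a : ℝ) (k : ℕ) :
    gbinom a (k+1) = gbinom a k * ((a + (k+1)) / (k+1)) := by
  unfold gbinom
  rw [Finset.prod_Icc_succ_top (Nat.le_add_left 1 k)]
  push_cast; ring_nf

lemma gbinom_one (k : ℕ) : gbinom 1 k = k + 1 := by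
  induction k with
  | zero => simp [gbinom_zero]
  | succ k ih =>
    rw [gbinom_succ, ih]
    have h : ((k:ℝ)+1) ≠ 0 := by positivity
    field_simp
    push_cast; ring

lemma gbinom_shift (c : ℝ) (k : ℕ) :
    gbinom c (k+1) = (c+1)/(k+1) * gbinom (c+1) k := by
  induction k with
  | zero => simp [gbinom_succ, gbinom_zero]
  | succ k ih =>
    rw [gbinom_succ, ih, gbinom_succ]
    have h1 : ((k:ℝ)+1) ≠ 0 := by positivity
    have h2 : ((k:ℝ)+1+1) ≠ 0 := by positivity
    push_cast
    field_simp
    ring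

lemma gbinom_pascal (c : ℝ) (k : ℕ) :
    gbinom (c+1) (k+1) = gbinom (c+1) k + gbinom c (k+1) := by
  rw [gbinom_succ, gbinom_shift]
  have h1 : ((k:ℝ)+1) ≠ 0 := by positivity
  field_simp
  ring

lemma gbinom_hockey (c : ℝ) (m : ℕ) :
    ∑ i ∈ Finset.range (m+1), gbinom c i = gbinom (c+1) m := by
  induction m with
  | zero => simp [gbinom_zero]
  | succ m ih => rw [Finset.sum_range_succ, ih, gbinom_pascal]

lemma gbinom_vander (c : ℝ) (m : ℕ) :
    ∑ i ∈ Finset.range (m+1), gbinom c i * gbinom 1 (m - i) = gbinom (c+2) m := by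
  induction m with
  | zero => simp [gbinom_zero, gbinom_one]
  | succ m ih =>
    rw [Finset.sum_range_succ]
    have key : ∀ i ∈ Finset.range (m+1),
        gbinom c i * gbinom 1 (m + 1 - i) = gbinom c i * gbinom 1 (m - i) + gbinom c i := by
      intro i hi
      rw [Finset.mem_range] at hi
      have : m + 1 - i = (m - i) + 1 := by omega
      rw [this, gbinom_one, gbinom_one]
      push_cast; ring
    rw [Finset.sum_congr rfl key, Finset.sum_add_distrib, ih]
    have : gbinom c (m+1) * gbinom 1 (m+1-(m+1)) = gbinom c (m+1) := by
      simp [gbinom_zero]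
    rw [this, add_assoc, gbinom_hockey]
    have h2 := gbinom_pascal (c+1) m
    have h3 : c + 1 + 1 = c + 2 := by ring
    rw [h3] at h2
    linarith [gbinom_pascal c m]

lemma gbinom_nonneg {c : ℝ} (hc : -1 ≤ c) (k : ℕ) : 0 ≤ gbinom c k := by
  unfold gbinom
  apply Finset.prod_nonneg
  intro ν hν
  rw [Finset.mem_Icc] at hν
  have h1 : (1:ℝ) ≤ ν := by exact_mod_cast hν.1
  apply div_nonneg <;> linarith

lemma cos_eq_half (x : ℝ) : Real.cos x = 1 - 2 * Real.sin (x/2)^2 := by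
  have h := Real.cos_two_mul (x/2)
  rw [show 2*(x/2) = x by ring] at h
  have := Real.sin_sq_add_cos_sq (x/2)
  nlinarith

lemma dirichlet (x : ℝ) (m : ℕ) :
    4 * Real.sin (x/2)^2 * (∑ j ∈ Finset.Icc 1 m, Real.sin (j * x))
      = Real.sin x + Real.sin (m * x) - Real.sin ((m+1) * x) := by
  induction m with
  | zero => simp
  | succ m ih =>
    rw [Finset.sum_Icc_succ_top (Nat.le_add_left 1 m)]
    have e2 : ((m:ℝ)+1+1) * x = ((m:ℝ)+1) * x + x := by ring
    have e3 : (m:ℝ) * x = ((m:ℝ)+1) * x - x := by ring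
    have hc := cos_eq_half x
    push_cast
    push_cast at ih
    rw [mul_add, ih, e2, e3, Real.sin_add, Real.sin_sub, hc]
    ring

lemma fejer_step (x : ℝ) (k : ℕ) :
    S (k+1) 1 x = S k 1 x + ∑ j ∈ Finset.Icc 1 (k+1), Real.sin (j * x) := by
  rw [S_def, S_def]
  rw [Finset.sum_Icc_succ_top (Nat.le_add_left 1 k),
      Finset.sum_Icc_succ_top (Nat.le_add_left 1 k)]
  have key : ∀ j ∈ Finset.Icc 1 k,
      gbinom 1 (k + 1 - j) * Real.sin (j * x)
        = gbinom 1 (k - j) * Real.sin (j * x) + Real.sin (j * x) := by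
    intro j hj
    rw [Finset.mem_Icc] at hj
    have : k + 1 - j = (k - j) + 1 := by omega
    rw [this, gbinom_one, gbinom_one]
    push_cast; ring
  rw [Finset.sum_congr rfl key, Finset.sum_add_distrib]
  simp [gbinom_zero]
  ring

lemma fejer_closed (x : ℝ) (k : ℕ) :
    4 * Real.sin (x/2)^2 * S k 1 x = (k+1) * Real.sin x - Real.sin ((k+1) * x) := by
  induction k with
  | zero => simp [S_def]
  | succ k ih =>
    rw [fejer_step, mul_add, ih, dirichlet]
    push_cast
    ring_nf

lemma abs_sin_nat_le {x : ℝ} (hx : x ∈ Set.Ioo 0 Real.pi) (k : ℕ) :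
    |Real.sin (k * x)| ≤ k * Real.sin x := by
  obtain ⟨hx0, hxpi⟩ := hx
  have hs : 0 < Real.sin x := Real.sin_pos_of_pos_of_lt_pi hx0 hxpi
  induction k with
  | zero => simp
  | succ k ih =>
    have e : ((k:ℝ)+1) * x = (k:ℝ) * x + x := by ring
    push_cast
    rw [e, Real.sin_add]
    calc |Real.sin ((k:ℝ)*x) * Real.cos x + Real.cos ((k:ℝ)*x) * Real.sin x|
        ≤ |Real.sin ((k:ℝ)*x) * Real.cos x| + |Real.cos ((k:ℝ)*x) * Real.sin x| := abs_add_le _ _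
      _ ≤ |Real.sin ((k:ℝ)*x)| * 1 + 1 * Real.sin x := by
          rw [abs_mul, abs_mul, abs_of_pos hs]
          gcongr
          · exact Real.abs_cos_le_one x
          · exact Real.abs_cos_le_one _
      _ ≤ (k:ℝ) * Real.sin x + 1 * Real.sin x := by
          rw [mul_one]
          have := ih
          push_cast at this
          linarith
      _ = ((k:ℝ)+1) * Real.sin x := by ring

lemma abs_sin_nat_lt {x : ℝ} (hx : x ∈ Set.Ioo 0 Real.pi) {k : ℕ} (hk : 2 ≤ k) :
    |Real.sin (k * x)| < k * Real.sin x := by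
  obtain ⟨hx0, hxpi⟩ := hx
  have hs : 0 < Real.sin x := Real.sin_pos_of_pos_of_lt_pi hx0 hxpi
  induction k with
  | zero => omega
  | succ k ih =>
    rcases Nat.lt_or_ge k 2 with hk2 | hk2
    · have hk1 : k = 1 := by omega
      subst hk1
      have e : ((2:ℕ):ℝ) * x = 2 * x := by norm_num
      rw [e, Real.sin_two_mul]
      have hc : |Real.cos x| < 1 := by
        have h2 : Real.cos x ^ 2 < 1 := by nlinarith [Real.sin_sq_add_cos_sq x]
        nlinarith [abs_nonneg (Real.cos x), sq_abs (Real.cos x)]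
      calc |2 * Real.sin x * Real.cos x| = 2 * Real.sin x * |Real.cos x| := by
            rw [abs_mul, abs_of_pos (by positivity)]
        _ < 2 * Real.sin x * 1 := by gcongr
        _ = ((2:ℕ):ℝ) * Real.sin x := by norm_num
    · have ihh := ih hk2
      have e : ((k:ℝ)+1) * x = (k:ℝ) * x + x := by ring
      push_cast
      rw [e, Real.sin_add]
      calc |Real.sin ((k:ℝ)*x) * Real.cos x + Real.cos ((k:ℝ)*x) * Real.sin x|
          ≤ |Real.sin ((k:ℝ)*x) * Real.cos x| + |Real.cos ((k:ℝ)*x) * Real.sin x| := abs_add_le _ _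
        _ ≤ |Real.sin ((k:ℝ)*x)| * 1 + 1 * Real.sin x := by
            rw [abs_mul, abs_mul, abs_of_pos hs]
            gcongr
            · exact Real.abs_cos_le_one x
            · exact Real.abs_cos_le_one _
        _ < (k:ℝ) * Real.sin x + 1 * Real.sin x := by
            rw [mul_one]
            linarith
        _ = ((k:ℝ)+1) * Real.sin x := by ring

lemma sin_half_pos {x : ℝ} (hx : x ∈ Set.Ioo 0 Real.pi) : 0 < Real.sin (x/2) :=
  Real.sin_pos_of_pos_of_lt_pi (by linarith [hx.1]) (by linarith [hx.2, Real.pi_pos])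

lemma fejer_pos {x : ℝ} (hx : x ∈ Set.Ioo 0 Real.pi) {k : ℕ} (hk : 1 ≤ k) :
    0 < S k 1 x := by
  have hs2 := sin_half_pos hx
  have hfc := fejer_closed x k
  have hlt := abs_sin_nat_lt hx (k := k+1) (by omega)
  have hs : 0 < Real.sin x := Real.sin_pos_of_pos_of_lt_pi hx.1 hx.2
  have h1 : Real.sin (((k:ℕ)+1) * x) < ((k:ℝ)+1) * Real.sin x := by
    push_cast at hlt ⊢
    calc Real.sin (((k:ℝ)+1)*x) ≤ |Real.sin (((k:ℝ)+1)*x)| := le_abs_self _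
      _ < _ := hlt
  have h2 : 0 < 4 * Real.sin (x/2)^2 * S k 1 x := by
    rw [hfc]; push_cast at h1 ⊢; linarith
  nlinarith [sq_nonneg (Real.sin (x/2))]

lemma S_decomp (n : ℕ) (a : ℝ) (x : ℝ) :
    S n a x = ∑ k ∈ Finset.Icc 1 n, gbinom (a-2) (n-k) * S k 1 x := by
  rw [S_def]
  have step1 : ∀ j ∈ Finset.Icc 1 n,
      gbinom a (n-j) * Real.sin (j*x)
        = ∑ k ∈ Finset.Icc j n, gbinom (a-2) (n-k) * (gbinom 1 (k-j) * Real.sin (j*x)) := by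
    intro j hj
    rw [Finset.mem_Icc] at hj
    have hv := gbinom_vander (a-2) (n-j)
    rw [show a-2+2 = a by ring] at hv
    rw [← hv, Finset.sum_mul]
    refine Finset.sum_bij' (fun i _ => n - i) (fun k _ => n - k) ?_ ?_ ?_ ?_ ?_
    · intro i hi
      rw [Finset.mem_range] at hi
      rw [Finset.mem_Icc]
      omega
    · intro k hk
      rw [Finset.mem_Icc] at hk
      rw [Finset.mem_range]
      omega
    · intro i hi
      rw [Finset.mem_range] at hi
      omega
    · intro k hk
      rw [Finset.mem_Icc] at hk
      omega
    · intro i hi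
      rw [Finset.mem_range] at hi
      have h1 : n - (n - i) = i := by omega
      have h2 : n - j - i = (n - i) - j := by omega
      rw [h1, h2]
      ring
  rw [Finset.sum_congr rfl step1]
  rw [Finset.sum_comm' (t' := Finset.Icc 1 n) (s' := fun k => Finset.Icc 1 k)
    (by intro j k; simp only [Finset.mem_Icc]; omega)]
  refine Finset.sum_congr rfl fun k hk => ?_
  rw [S_def, Finset.mul_sum]

lemma S_two (x : ℝ) : S 2 1 x = 2 * Real.sin x * (1 + Real.cos x) := by
  rw [S_def, show Finset.Icc 1 2 = {1, 2} from rfl]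
  rw [Finset.sum_insert (by decide), Finset.sum_singleton]
  norm_num [gbinom_one, gbinom_zero]
  rw [Real.sin_two_mul]
  ring

-- sine difference identity
lemma sin_diff_identity (x : ℝ) (m : ℕ) :
    Real.sin ((2*(m:ℝ)+3) * x) - Real.sin (3*x)
      = 2 * Real.cos (((m:ℝ)+3)*x) * Real.sin ((m:ℝ)*x) := by
  have e1 : (2*(m:ℝ)+3) * x = ((m:ℝ)+3)*x + (m:ℝ)*x := by ring
  have e2 : (3:ℝ)*x = ((m:ℝ)+3)*x - (m:ℝ)*x := by ring
  rw [e1, e2, Real.sin_add, Real.sin_sub]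
  ring

lemma key_g (x : ℝ) (m : ℕ) :
    4 * Real.sin (x/2)^2 * (S (2*m+2) 1 x - S 2 1 x)
      = 2*(m:ℝ) * Real.sin x - 2 * Real.cos (((m:ℝ)+3)*x) * Real.sin ((m:ℝ)*x) := by
  have h1 := fejer_closed x (2*m+2)
  have h2 := fejer_closed x 2
  have h3 := sin_diff_identity x m
  push_cast at h1 h2
  have e1 : ((2*(m:ℝ)+2)+1) * x = (2*(m:ℝ)+3)*x := by ring
  have e2 : ((2:ℝ)+1) * x = 3*x := by ring
  rw [e1] at h1
  rw [e2] at h2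
  nlinarith [h1, h2, h3]

lemma cos_sin_bound {x : ℝ} (hx : x ∈ Set.Ioo 0 Real.pi) (m : ℕ) (y : ℝ) :
    Real.cos y * Real.sin ((m:ℝ)*x) ≤ (m:ℝ) * Real.sin x := by
  have h1 : Real.cos y * Real.sin ((m:ℝ)*x) ≤ |Real.sin ((m:ℝ)*x)| := by
    calc Real.cos y * Real.sin ((m:ℝ)*x) ≤ |Real.cos y * Real.sin ((m:ℝ)*x)| := le_abs_self _
      _ = |Real.cos y| * |Real.sin ((m:ℝ)*x)| := abs_mul _ _
      _ ≤ 1 * |Real.sin ((m:ℝ)*x)| := by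
          gcongr; exact Real.abs_cos_le_one y
      _ = |Real.sin ((m:ℝ)*x)| := one_mul _
  have h2 := abs_sin_nat_le hx m
  push_cast at h2
  linarith

lemma S_compare {x : ℝ} (hx : x ∈ Set.Ioo 0 Real.pi) (m : ℕ) :
    S 2 1 x ≤ S (2*m+2) 1 x := by
  have hs2 := sin_half_pos hx
  have hg := key_g x m
  have hb := cos_sin_bound hx m (((m:ℝ)+3)*x)
  have hsq : 0 < Real.sin (x/2)^2 := by positivity
  nlinarith [hg, hb, hsq]

lemma S_compare_strict {x : ℝ} (hx : x ∈ Set.Ioo 0 Real.pi) {m : ℕ} (hm : 2 ≤ m) :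
    S 2 1 x < S (2*m+2) 1 x := by
  have hs2 := sin_half_pos hx
  have hg := key_g x m
  have hlt := abs_sin_nat_lt hx (k := m) hm
  push_cast at hlt
  have hb : Real.cos (((m:ℝ)+3)*x) * Real.sin ((m:ℝ)*x) < (m:ℝ) * Real.sin x := by
    calc Real.cos (((m:ℝ)+3)*x) * Real.sin ((m:ℝ)*x)
        ≤ |Real.cos (((m:ℝ)+3)*x) * Real.sin ((m:ℝ)*x)| := le_abs_self _
      _ = |Real.cos (((m:ℝ)+3)*x)| * |Real.sin ((m:ℝ)*x)| := abs_mul _ _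
      _ ≤ 1 * |Real.sin ((m:ℝ)*x)| := by gcongr; exact Real.abs_cos_le_one _
      _ = |Real.sin ((m:ℝ)*x)| := one_mul _
      _ < (m:ℝ) * Real.sin x := hlt
  have hsq : 0 < Real.sin (x/2)^2 := by positivity
  nlinarith [hg, hb, hsq]

lemma S_four_eq {x : ℝ} (hx : x ∈ Set.Ioo 0 Real.pi) (h : S (2*1+2) 1 x = S 2 1 x) :
    x = Real.pi / 2 := by
  have hs2 := sin_half_pos hx
  have hs : 0 < Real.sin x := Real.sin_pos_of_pos_of_lt_pi hx.1 hx.2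
  have hg := key_g x 1
  rw [h, sub_self, mul_zero] at hg
  -- 0 = 2*sinx - 2*cos(4x)*sin(x)
  push_cast at hg
  rw [show ((1:ℝ)+3)*x = 4*x by ring, show (1:ℝ)*x = x by ring] at hg
  have hcos : Real.cos (4*x) = 1 := by
    have : Real.sin x * (1 - Real.cos (4*x)) = 0 := by linarith
    rcases mul_eq_zero.mp this with h' | h'
    · linarith
    · linarith
  rw [Real.cos_eq_one_iff] at hcos
  obtain ⟨k, hk⟩ := hcos
  have hpi := Real.pi_pos
  have hk1 : (0:ℝ) < (k:ℝ) * (2*Real.pi) := by rw [hk]; linarith [hx.1]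
  have hk2 : (k:ℝ) * (2*Real.pi) < 4 * Real.pi := by rw [hk]; linarith [hx.2]
  have hkpos : 0 < k := by
    by_contra hle
    push_neg at hle
    have : (k:ℝ) ≤ 0 := by exact_mod_cast hle
    nlinarith
  have hklt : k < 2 := by
    by_contra hge
    push_neg at hge
    have : (2:ℝ) ≤ (k:ℝ) := by exact_mod_cast hge
    nlinarith
  have : k = 1 := by omega
  subst this
  push_cast at hk
  linarith

lemma S_four_pi_two : S 4 1 (Real.pi/2) = 2 := by
  rw [S_def, show Finset.Icc 1 4 = {1, 2, 3, 4} from rfl]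
  rw [Finset.sum_insert (by decide), Finset.sum_insert (by decide),
      Finset.sum_insert (by decide), Finset.sum_singleton]
  have g3 : gbinom 1 3 = 4 := by rw [gbinom_one]; norm_num
  have g2 : gbinom 1 2 = 3 := by rw [gbinom_one]; norm_num
  have g1 : gbinom 1 1 = 2 := by rw [gbinom_one]; norm_num
  have g0 : gbinom 1 0 = 1 := gbinom_zero 1
  norm_num [g3, g2, g1, g0]
  have e2 : ((2:ℕ):ℝ) * (Real.pi/2) = Real.pi := by push_cast; ring
  have e3 : ((3:ℕ):ℝ) * (Real.pi/2) = Real.pi/2 + Real.pi := by push_cast; ring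
  have e4 : ((4:ℕ):ℝ) * (Real.pi/2) = 2 * Real.pi := by push_cast; ring
  push_cast
  rw [show (2:ℝ) * (Real.pi/2) = Real.pi by ring,
      show (3:ℝ) * (Real.pi/2) = Real.pi/2 + Real.pi by ring,
      show (4:ℝ) * (Real.pi/2) = 2 * Real.pi by ring]
  rw [Real.sin_pi, Real.sin_add_pi, Real.sin_pi_div_two, Real.sin_two_pi]
  norm_num

theorem stmt_7 (n : ℕ) (hn : 2 ≤ n) (heven : Even n) (a : ℝ) (ha : 1 ≤ a)
    (x : ℝ) (hx : x ∈ Set.Ioo 0 Real.pi) :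
    2 * Real.sin x * (1 + Real.cos x) ≤ S n a x ∧
    (S n a x = 2 * Real.sin x * (1 + Real.cos x) ↔
      (n = 2 ∧ a = 1) ∨ (n = 4 ∧ a = 1 ∧ x = Real.pi / 2)) := by
  obtain ⟨t, ht⟩ := heven
  have hm : ∃ m, n = 2*m + 2 := ⟨t - 1, by omega⟩
  obtain ⟨m, hnm⟩ := hm
  have hca : (-1:ℝ) ≤ a - 2 ∨ True := Or.inr trivial
  have hc : (-1:ℝ) ≤ a - 2 := by linarith
  -- decomposition and splitting off the top term
  have hdec := S_decomp n a x
  have hsplit : ∑ k ∈ Finset.Icc 1 n, gbinom (a-2) (n-k) * S k 1 x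
      = (∑ k ∈ Finset.Icc 1 (n-1), gbinom (a-2) (n-k) * S k 1 x) + S n 1 x := by
    have hn' : n = (n-1) + 1 := by omega
    rw [hn', Finset.sum_Icc_succ_top (Nat.le_add_left 1 (n-1))]
    rw [← hn']
    have : n - n = 0 := by omega
    rw [this, gbinom_zero, one_mul]
  set T := ∑ k ∈ Finset.Icc 1 (n-1), gbinom (a-2) (n-k) * S k 1 x with hT
  have hTnonneg : 0 ≤ T := by
    apply Finset.sum_nonneg
    intro k hk
    rw [Finset.mem_Icc] at hk
    exact mul_nonneg (gbinom_nonneg hc _) (le_of_lt (fejer_pos hx hk.1))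
  have hSn : S n a x = T + S n 1 x := by rw [hdec, hsplit]
  have hcomp : S 2 1 x ≤ S n 1 x := by rw [hnm]; exact S_compare hx m
  have hS2 : S 2 1 x = 2 * Real.sin x * (1 + Real.cos x) := S_two x
  constructor
  · rw [hSn, ← hS2]; linarith
  constructor
  · -- equality implies the two cases
    intro heq
    rw [hSn, ← hS2] at heq
    have hT0 : T = 0 := by linarith
    have hSneq : S n 1 x = S 2 1 x := by linarith
    -- a = 1
    have ha1 : a = 1 := by
      have hterms := (Finset.sum_eq_zero_iff_of_nonneg (fun k hk => by
        rw [Finset.mem_Icc] at hk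
        exact mul_nonneg (gbinom_nonneg hc _) (le_of_lt (fejer_pos hx hk.1)))).mp hT0
      have hmem : n - 1 ∈ Finset.Icc 1 (n-1) := by
        rw [Finset.mem_Icc]; omega
      have h1 := hterms (n-1) hmem
      have h2 : n - (n-1) = 1 := by omega
      rw [h2] at h1
      have hpos := fejer_pos hx (k := n-1) (by omega)
      have hg1 : gbinom (a-2) 1 = 0 := by
        rcases mul_eq_zero.mp h1 with h' | h'
        · exact h'
        · linarith
      rw [show gbinom (a-2) 1 = gbinom (a-2) 0 * ((a-2 + ((0:ℕ)+1)) / ((0:ℕ)+1)) from gbinom_succ (a-2) 0, gbinom_zero] at hg1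
      push_cast at hg1
      have : a - 2 + 1 = 0 := by
        field_simp at hg1
        linarith
      linarith
    -- n = 2 or (n = 4 and x = π/2)
    rcases Nat.lt_or_ge m 1 with hm0 | hm1
    · left
      exact ⟨by omega, ha1⟩
    rcases Nat.lt_or_ge m 2 with hm1' | hm2
    · right
      have hmeq : m = 1 := by omega
      refine ⟨by omega, ha1, ?_⟩
      apply S_four_eq hx
      have he : 2*1+2 = n := by omega
      rw [he]
      exact hSneq
    · exfalso
      have := S_compare_strict hx hm2
      rw [← hnm] at this
      linarith
  · -- the two cases give equality
    rintro (⟨hn2, ha1⟩ | ⟨hn4, ha1, hx2⟩)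
    · subst hn2; subst ha1
      exact S_two x
    · subst hn4; subst ha1; subst hx2
      have h4 : S 4 1 (Real.pi/2) = 2 := S_four_pi_two
      rw [h4, Real.sin_pi_div_two, Real.cos_pi_div_two]
      norm_num
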